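/- For every integer k ≥ 2, the coalescence manifold for sample size 3 satisfies C_{3,k} = { (a,b) ∈ ℝ² : a > 0 and 0 < b < a }; in particular C_{3,k} = C_{3,2} for all k ≥ 2. -/

import Mathlib

open Finset

/-- The map `χ_{n,k}` specialized to sample size `n = 3` (coordinates `m = 2, 3` with
`C(2,2) = 1` and `C(3,2) = 3`), with the convention `x_k = 0`. -/
noncomputable def chi3 (k : ℕ) (x y : ℕ → ℝ) : Fin 2 → ℝ :=
  fun i =>
    (1 / ((i.val + 2).choose 2 : ℝ)) *
      ∑ j ∈ Finset.Icc 1 k,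
        y j * (∏ l ∈ Finset.Icc 1 (j - 1), x l ^ (i.val + 2).choose 2) *
          (1 - (if j = k then (0 : ℝ) else x j) ^ (i.val + 2).choose 2)

/-- The coalescence manifold `C_{3,k} ⊆ ℝ²`. -/
def Coal3 (k : ℕ) : Set (Fin 2 → ℝ) :=
  { c | ∃ x y : ℕ → ℝ,
      (∀ j, 1 ≤ j → j ≤ k - 1 → 0 < x j ∧ x j < 1) ∧
      (∀ j, 1 ≤ j → j ≤ k → 0 < y j) ∧
      c = chi3 k x y }

/-!
Each summand of `χ_{3,k}` is `y_j P_j^m (1 - q_j^m)` with `0 < P_j ≤ 1`, `0 ≤ q_j < 1`, and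
`P³ (1 - q³) = P (1 - q) · P² (1 + q + q²) < 3 P (1 - q)`, whence `0 < c₃ < c₂`.
Conversely, when `y` is constant from `j = 2` on, the weights `∏_{l<j} x_l^m (1 - x_j^m)` telescope
to `1` (because `x_k = 0`), so `χ_{3,k}` only sees `x₁, y₁, y₂`: this gives `C_{3,2} ⊆ C_{3,k}`.
Finally `(a, a t²)` with `a > 0`, `0 < t < 1` is `χ_{3,2}` at `x₁ = t`, `y₁ = 2 a t² / (1 - t²)`,
`y₂ = a (1 - t) (1 + 2 t) / (t (1 + t))`, and every `(a, b)` with `0 < b < a` has this form.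
-/

lemma sum_Icc_prod_mul_one_sub {R : Type*} [CommRing R] (w : ℕ → R) (k : ℕ) :
    ∑ j ∈ Icc 1 k, (∏ l ∈ Icc 1 (j - 1), w l) * (1 - w j) = 1 - ∏ j ∈ Icc 1 k, w j := by
  induction k with
  | zero => simp
  | succ k ih =>
    rw [sum_Icc_succ_top (by omega), prod_Icc_succ_top (by omega), ih, Nat.add_sub_cancel]
    ring

lemma sum_Icc_coal_of_tail_const {p k : ℕ} (hp : p ≠ 0) (hk : 2 ≤ k) (x y : ℕ → ℝ)
    (hy : ∀ j, 2 ≤ j → y j = y 2) :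
    ∑ j ∈ Icc 1 k, y j * (∏ l ∈ Icc 1 (j - 1), x l ^ p) * (1 - (if j = k then 0 else x j) ^ p) =
      y 1 * (1 - x 1 ^ p) + y 2 * x 1 ^ p := by
  set w : ℕ → ℝ := fun l => (if l = k then 0 else x l) ^ p
  set d : ℕ → ℝ := fun j => (∏ l ∈ Icc 1 (j - 1), w l) * (1 - w j)
  have h1 : 1 ∈ Icc 1 k := mem_Icc.mpr ⟨le_rfl, by omega⟩
  have hterm : ∀ j ∈ Icc 1 k,
      y j * (∏ l ∈ Icc 1 (j - 1), x l ^ p) * (1 - (if j = k then 0 else x j) ^ p) = y j * d j := by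
    intro j hj
    have hlt : ∀ l ∈ Icc 1 (j - 1), l ≠ k := fun l hl => by
      simp only [mem_Icc] at hj hl; omega
    simp only [d, w, mul_assoc]
    congr 2
    exact prod_congr rfl fun l hl => by rw [if_neg (hlt l hl)]
  have hd_sum : ∑ j ∈ Icc 1 k, d j = 1 := by
    rw [sum_Icc_prod_mul_one_sub, prod_eq_zero (mem_Icc.mpr ⟨by omega, le_rfl⟩) (by simp [w, hp]),
      sub_zero]
  have hd_one : d 1 = 1 - x 1 ^ p := by simp [d, w, show (1 : ℕ) ≠ k by omega]
  have htail : ∑ j ∈ (Icc 1 k).erase 1, y j * d j = y 2 * (1 - d 1) := by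
    rw [← hd_sum, ← add_sum_erase _ _ h1, add_sub_cancel_left, mul_sum]
    refine sum_congr rfl fun j hj => ?_
    rw [hy j (by simp only [mem_erase, mem_Icc] at hj; omega)]
  rw [sum_congr rfl hterm, ← add_sum_erase _ _ h1, htail, hd_one]
  ring

lemma chi3_two_apply (x y : ℕ → ℝ) (i : Fin 2) :
    chi3 2 x y i = 1 / ((i.val + 2).choose 2 : ℝ) *
      (y 1 * (1 - x 1 ^ (i.val + 2).choose 2) + y 2 * x 1 ^ (i.val + 2).choose 2) := by
  simp [chi3, sum_Icc_succ_top, (Nat.choose_pos (by omega : 2 ≤ i.val + 2)).ne']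

lemma chi3_eq_chi3_two_of_tail_const {k : ℕ} (hk : 2 ≤ k) (x y : ℕ → ℝ)
    (hy : ∀ j, 2 ≤ j → y j = y 2) : chi3 k x y = chi3 2 x y := by
  funext i
  rw [chi3_two_apply, chi3, sum_Icc_coal_of_tail_const (Nat.choose_pos (by omega)).ne' hk x y hy]

lemma coal3_two_subset {k : ℕ} (hk : 2 ≤ k) : Coal3 2 ⊆ Coal3 k := by
  rintro c ⟨x, y, hx, hy, rfl⟩
  set x' : ℕ → ℝ := fun l => if l = 1 then x 1 else 1 / 2
  set y' : ℕ → ℝ := fun j => if j = 1 then y 1 else y 2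
  have hchi : chi3 k x' y' = chi3 2 x y := by
    rw [chi3_eq_chi3_two_of_tail_const hk x' y' fun j hj => by simp [y', show j ≠ 1 by omega]]
    funext i
    simp [chi3_two_apply, x', y']
  refine ⟨x', y', fun j _ _ => ?_, fun j _ _ => ?_, hchi.symm⟩
  · by_cases hj : j = 1
    · simpa [x', hj] using hx 1 le_rfl le_rfl
    · simp only [x', if_neg hj]; norm_num
  · by_cases hj : j = 1
    · simpa [y', hj] using hy 1 le_rfl (by norm_num)
    · simpa [y', hj] using hy 2 (by norm_num) le_rfl

lemma mem_coal3_two {c : Fin 2 → ℝ} {t : ℝ} (hc : 0 < c 0) (ht0 : 0 < t) (ht1 : t < 1)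
    (hct : c 1 = c 0 * t ^ 2) : c ∈ Coal3 2 := by
  set a := c 0
  have h1t : 0 < 1 - t := sub_pos.mpr ht1
  set y : ℕ → ℝ := fun j =>
    if j = 1 then 2 * a * t ^ 2 / ((1 - t) * (1 + t)) else a * (1 - t) * (1 + 2 * t) / (t * (1 + t))
  refine ⟨fun _ => t, y, fun _ _ _ => ⟨ht0, ht1⟩, fun j _ _ => ?_, ?_⟩
  · simp only [y]
    split_ifs <;> positivity
  · funext i
    rw [chi3_two_apply]
    have h1t_ne : 1 - t ≠ 0 := h1t.ne'
    fin_cases i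
    · simp only [Fin.zero_eta, Fin.isValue, zero_add, Nat.choose_self, Nat.cast_one, ne_eq,
        one_ne_zero, not_false_eq_true, div_self, ↓reduceIte, pow_one, OfNat.ofNat_ne_one, one_mul, y]
      field_simp
      ring
    · simp only [Fin.mk_one, Fin.isValue, hct, Nat.choose, add_zero, Nat.reduceAdd,
        Nat.cast_ofNat, one_div, ↓reduceIte, OfNat.ofNat_ne_one, y]
      field_simp
      ring

lemma cone_subset_coal3_two :
    { c : Fin 2 → ℝ | 0 < c 0 ∧ 0 < c 1 ∧ c 1 < c 0 } ⊆ Coal3 2 := by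
  rintro c ⟨h0, h1, h10⟩
  have hr0 : 0 < c 1 / c 0 := div_pos h1 h0
  have hr1 : c 1 / c 0 < 1 := (div_lt_one h0).mpr h10
  refine mem_coal3_two h0 (Real.sqrt_pos.mpr hr0) ?_ ?_
  · rwa [Real.sqrt_lt' one_pos, one_pow]
  · rw [Real.sq_sqrt hr0.le]
    field_simp

lemma pow_three_mul_one_sub_pow_three_lt {P q : ℝ} (hP0 : 0 < P) (hP1 : P ≤ 1) (hq0 : 0 ≤ q)
    (hq1 : q < 1) : P ^ 3 * (1 - q ^ 3) < 3 * (P * (1 - q)) := by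
  have hpos : 0 < P * (1 - q) := mul_pos hP0 (sub_pos.mpr hq1)
  have hfactor : P ^ 2 * (1 + q + q ^ 2) < 3 := by
    have : P ^ 2 ≤ 1 := pow_le_one₀ hP0.le hP1
    nlinarith
  calc P ^ 3 * (1 - q ^ 3) = P * (1 - q) * (P ^ 2 * (1 + q + q ^ 2)) := by ring
    _ < P * (1 - q) * 3 := mul_lt_mul_of_pos_left hfactor hpos
    _ = 3 * (P * (1 - q)) := mul_comm _ _

section Forward

variable {k : ℕ} {x : ℕ → ℝ}

lemma chi3_zero_eq (y : ℕ → ℝ) :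
    chi3 k x y 0 =
      ∑ j ∈ Icc 1 k, y j * (∏ l ∈ Icc 1 (j - 1), x l) * (1 - if j = k then 0 else x j) := by
  simp [chi3]

lemma chi3_one_eq (y : ℕ → ℝ) :
    chi3 k x y 1 = (∑ j ∈ Icc 1 k,
      y j * (∏ l ∈ Icc 1 (j - 1), x l) ^ 3 * (1 - (if j = k then 0 else x j) ^ 3)) / 3 := by
  simp [chi3, prod_pow, Nat.choose, div_eq_inv_mul]

variable (hx : ∀ j, 1 ≤ j → j ≤ k - 1 → 0 < x j ∧ x j < 1)
include hx

lemma prod_Icc_coal_mem_Ioc {j : ℕ} (hj : j ∈ Icc 1 k) :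
    ∏ l ∈ Icc 1 (j - 1), x l ∈ Set.Ioc 0 1 := by
  have hxl : ∀ l ∈ Icc 1 (j - 1), 0 < x l ∧ x l < 1 := fun l hl => by
    simp only [mem_Icc] at hj hl; exact hx l hl.1 (by omega)
  exact ⟨prod_pos fun l hl => (hxl l hl).1,
    prod_le_one (fun l hl => (hxl l hl).1.le) fun l hl => (hxl l hl).2.le⟩

lemma coal_factor_mem_Ico {j : ℕ} (hj : j ∈ Icc 1 k) :
    (if j = k then 0 else x j) ∈ Set.Ico 0 1 := by
  split_ifs with hjk
  · exact ⟨le_rfl, one_pos⟩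
  · simp only [mem_Icc] at hj
    exact (hx j hj.1 (by omega)).imp le_of_lt id

lemma zero_lt_chi3_one_lt_chi3_zero (hk : 1 ≤ k) {y : ℕ → ℝ} (hy : ∀ j, 1 ≤ j → j ≤ k → 0 < y j) :
    0 < chi3 k x y 0 ∧ 0 < chi3 k x y 1 ∧ chi3 k x y 1 < chi3 k x y 0 := by
  have hne : (Icc 1 k).Nonempty := nonempty_Icc.mpr hk
  have hyj : ∀ j ∈ Icc 1 k, 0 < y j := fun j hj => by
    simp only [mem_Icc] at hj; exact hy j hj.1 hj.2
  rw [chi3_zero_eq, chi3_one_eq]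
  refine ⟨sum_pos (fun j hj => ?_) hne, div_pos (sum_pos (fun j hj => ?_) hne) three_pos, ?_⟩
  · obtain ⟨hP0, -⟩ := prod_Icc_coal_mem_Ioc hx hj
    obtain ⟨-, hq1⟩ := coal_factor_mem_Ico hx hj
    exact mul_pos (mul_pos (hyj j hj) hP0) (sub_pos.mpr hq1)
  · obtain ⟨hP0, -⟩ := prod_Icc_coal_mem_Ioc hx hj
    obtain ⟨hq0, hq1⟩ := coal_factor_mem_Ico hx hj
    exact mul_pos (mul_pos (hyj j hj) (pow_pos hP0 3))
      (sub_pos.mpr (pow_lt_one₀ hq0 hq1 three_ne_zero))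
  · rw [div_lt_iff₀ three_pos, sum_mul]
    refine sum_lt_sum_of_nonempty hne fun j hj => ?_
    obtain ⟨hP0, hP1⟩ := prod_Icc_coal_mem_Ioc hx hj
    obtain ⟨hq0, hq1⟩ := coal_factor_mem_Ico hx hj
    have := mul_lt_mul_of_pos_left (pow_three_mul_one_sub_pow_three_lt hP0 hP1 hq0 hq1) (hyj j hj)
    linarith

end Forward

lemma coal3_subset_cone {k : ℕ} (hk : 1 ≤ k) :
    Coal3 k ⊆ { c : Fin 2 → ℝ | 0 < c 0 ∧ 0 < c 1 ∧ c 1 < c 0 } := by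
  rintro c ⟨x, y, hx, hy, rfl⟩
  exact zero_lt_chi3_one_lt_chi3_zero hx hk hy

lemma coal3_eq_cone {k : ℕ} (hk : 2 ≤ k) :
    Coal3 k = { c : Fin 2 → ℝ | 0 < c 0 ∧ 0 < c 1 ∧ c 1 < c 0 } :=
  (coal3_subset_cone (by omega)).antisymm (cone_subset_coal3_two.trans (coal3_two_subset hk))

theorem coal_three (k : ℕ) (hk : 2 ≤ k) :
    Coal3 k = { c : Fin 2 → ℝ | 0 < c 0 ∧ 0 < c 1 ∧ c 1 < c 0 } ∧ Coal3 k = Coal3 2 :=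
  ⟨coal3_eq_cone hk, by rw [coal3_eq_cone hk, coal3_eq_cone le_rfl]⟩
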